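/- Let ℓ ≥ 1 and let C be a tightly connected ℓ-graph that contains a switcher. Then C is strongly connected: for any two directed edges of C there is a tight walk in C whose first ℓ vertices are the first directed edge in order and whose last ℓ vertices are the second directed edge in order. -/

import Mathlib

open Finset

variable {A : Type*} [DecidableEq A]

/-- The set of vertices occupying positions `i, …, i+k-1` of the walk `w`. -/
def walkEdgeAt (k : ℕ) (w : List A) (i : ℕ) : Finset A :=
  ((w.drop i).take k).toFinset

/-- `w` is a tight walk in the `k`-graph with edge set `E`: it has at least `k`
vertices and every `k` consecutive vertices form an edge of `E`. -/
def IsTightWalk (k : ℕ) (E : Finset (Finset A)) (w : List A) : Prop :=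
  k ≤ w.length ∧ ∀ i, i + k ≤ w.length → walkEdgeAt k w i ∈ E

/-- The edge `e` appears on the walk `w` (as `k` consecutive vertices). -/
def EdgeOnWalk (k : ℕ) (w : List A) (e : Finset A) : Prop :=
  ∃ i, i + k ≤ w.length ∧ walkEdgeAt k w i = e

/-- A `k`-uniform edge set is tightly connected if any two of its edges lie on a
common tight walk all of whose edges belong to it. -/
def TightlyConnected (k : ℕ) (E : Finset (Finset A)) : Prop :=
  ∀ e₁ ∈ E, ∀ e₂ ∈ E, ∃ w : List A, IsTightWalk k E w ∧ EdgeOnWalk k w e₁ ∧ EdgeOnWalk k w e₂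

/-- `w` is a closed tight walk: every cyclic interval of `k` consecutive vertices
forms an edge of `E`.  Its length is `w.length`. -/
def IsClosedTightWalk (k : ℕ) (E : Finset (Finset A)) (w : List A) : Prop :=
  k ≤ w.length ∧ ∀ i < w.length, ((w.rotate i).take k).toFinset ∈ E

/-- A tight Hamilton cycle: a cyclic ordering of all the vertices in which every `k`
cyclically consecutive vertices form an edge. -/
def HasTightHamCycle (k : ℕ) (V : Finset A) (E : Finset (Finset A)) : Prop :=
  ∃ w : List A, w.Nodup ∧ w.toFinset = V ∧ IsClosedTightWalk k E w

/-- The `j`-th shadow: all `j`-element sets contained in some edge. -/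
def shadow (j : ℕ) (E : Finset (Finset A)) : Finset (Finset A) :=
  E.biUnion fun e => e.powersetCard j

/-- The link graph of `S`: the `(k-d)`-graph whose edges are `e \ S` for edges `e ⊇ S`. -/
def link (S : Finset A) (E : Finset (Finset A)) : Finset (Finset A) :=
  (E.filter fun e => S ⊆ e).image fun e => e \ S

/-- `E` has a fractional matching of size at least `m`. -/
def HasFracMatching (E : Finset (Finset A)) (m : ℝ) : Prop :=
  ∃ w : Finset A → ℝ,
    (∀ e ∈ E, 0 ≤ w e ∧ w e ≤ 1) ∧
    (∀ v : A, ∑ e ∈ E.filter (fun e' => v ∈ e'), w e ≤ 1) ∧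
    m ≤ ∑ e ∈ E, w e

/-- `E` has a `b`-fractional matching of size at least `m` (vertex constraints on `V`). -/
def HasBFracMatching (V : Finset A) (E : Finset (Finset A)) (b : A → ℝ) (m : ℝ) : Prop :=
  ∃ w : Finset A → ℝ,
    (∀ e ∈ E, 0 ≤ w e ∧ w e ≤ 1) ∧
    (∀ v ∈ V, ∑ e ∈ E.filter (fun e' => v ∈ e'), w e ≤ b v) ∧
    m ≤ ∑ e ∈ E, w e

/-- `γ`-robustly matchable: every vertex weighting with values in `[1-γ,1]` is realised
exactly by an edge weighting with values in `[0,1]`. -/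
def RobustlyMatchable (γ : ℝ) (V : Finset A) (E : Finset (Finset A)) : Prop :=
  ∀ b : A → ℝ, (∀ v ∈ V, 1 - γ ≤ b v ∧ b v ≤ 1) →
    ∃ w : Finset A → ℝ, (∀ e ∈ E, 0 ≤ w e ∧ w e ≤ 1) ∧
      ∀ v ∈ V, ∑ e ∈ E.filter (fun e' => v ∈ e'), w e = b v

/-- A switcher: an edge `e` with a central vertex `a` such that for every `b ∈ e`
there is `c ∉ e` with `(e ∪ {c}) \ {a}` and `(e ∪ {c}) \ {b}` both edges. -/
def HasSwitcher (C : Finset (Finset A)) : Prop :=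
  ∃ e ∈ C, ∃ a ∈ e, ∀ b ∈ e, ∃ c, c ∉ e ∧
    insert c (e.erase a) ∈ C ∧ insert c (e.erase b) ∈ C

/-- An arc for the `d`-vicinity `C` of the `k`-graph with edge set `E`: a tuple of
`k+1` distinct vertices `v₁, …, v_{k+1}` with `{v₁,…,v_d} ∈ ∂_d`,
`{v_{d+1},…,v_k} ∈ C {v₁,…,v_d}`, `{v₂,…,v_{d+1}} ∈ ∂_d` and
`{v_{d+2},…,v_{k+1}} ∈ C {v₂,…,v_{d+1}}`. -/
def HasArc (k d : ℕ) (E : Finset (Finset A)) (C : Finset A → Finset (Finset A)) : Prop :=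
  ∃ l : List A, l.length = k + 1 ∧ l.Nodup ∧
    (l.take d).toFinset ∈ shadow d E ∧
    ((l.drop d).take (k - d)).toFinset ∈ C ((l.take d).toFinset) ∧
    ((l.drop 1).take d).toFinset ∈ shadow d E ∧
    (l.drop (d + 1)).toFinset ∈ C (((l.drop 1).take d).toFinset)

/-- The `k`-graph generated by a `d`-vicinity: all sets `B ∪ S` with `S ∈ ∂_d(E)`
and `B ∈ C S`. -/
def generatedEdges (d : ℕ) (E : Finset (Finset A)) (C : Finset A → Finset (Finset A)) :
    Finset (Finset A) :=
  (shadow d E).biUnion fun S => (C S).image fun B => B ∪ S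

/-- `α`-perturbed minimum relative `d`-degree at least `δ` for a `k`-graph on vertex
set `V` with edge set `E`. -/
def PerturbedDegLB (k d : ℕ) (a δ : ℝ) (V : Finset A) (E : Finset (Finset A)) : Prop :=
  ∀ j : ℕ, 1 ≤ j → j ≤ d →
    (∀ S ∈ shadow j E,
      δ * (((V.card - j).choose (k - j) : ℕ) : ℝ) ≤ ((E.filter fun e => S ⊆ e).card : ℝ)) ∧
    ((((V.powersetCard j).filter fun S => S ∉ shadow j E).card : ℝ)
        ≤ a * ((V.card.choose j : ℕ) : ℝ)) ∧
    (∀ T : Finset A, (T ∈ shadow (j - 1) E ∨ (j = 1 ∧ T = ∅)) →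
      ((((V.powersetCard j).filter fun S => T ⊆ S ∧ S ∉ shadow j E).card : ℝ)
        < a * ((V.card : ℝ) - (j : ℝ) + 1)))

/-- A `(γ, δ)`-Hamilton `d`-vicinity of a `k`-graph on `t = V.card` vertices. -/
def IsHamVicinity (k d : ℕ) (γ δ : ℝ) (V : Finset A) (E : Finset (Finset A))
    (C : Finset A → Finset (Finset A)) : Prop :=
  (∀ S ∈ shadow d E, C S ⊆ link S E) ∧
  (∀ S ∈ shadow d E, TightlyConnected (k - d) (C S)) ∧
  (∀ S ∈ shadow d E, ∀ S' ∈ shadow d E, (C S ∩ C S').Nonempty) ∧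
  (∀ S ∈ shadow d E, HasSwitcher (C S)) ∧
  HasArc k d E C ∧
  (∀ S ∈ shadow d E, HasFracMatching (C S) ((1 / (k : ℝ) + γ) * (V.card : ℝ))) ∧
  (∀ S ∈ shadow d E, (1 - δ + γ) * ((V.card.choose (k - d) : ℕ) : ℝ) ≤ ((C S).card : ℝ))

/-- An `(a, γ, δ)`-Hamilton framework: a subgraph on vertex set `VH` with edge set `EH`
of a `k`-graph on vertex set `VR`, satisfying (F1)–(F5). -/
def IsHamFramework (k : ℕ) (a γ δ : ℝ) (VR VH : Finset A) (EH : Finset (Finset A)) : Prop :=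
  (1 - a) * (VR.card : ℝ) ≤ (VH.card : ℝ) ∧
  TightlyConnected k EH ∧
  (∃ w : List A, IsClosedTightWalk k EH w ∧ w.length % k = 1 % k) ∧
  RobustlyMatchable γ VH EH ∧
  (∀ v ∈ VH, (1 - δ + γ) * (((VH.card - 1).choose (k - 1) : ℕ) : ℝ)
      ≤ ((EH.filter fun e => v ∈ e).card : ℝ))

/-- A tight component: an edge-maximal tightly connected subgraph. -/
def IsTightComponent (k : ℕ) (E C : Finset (Finset A)) : Prop :=
  C ⊆ E ∧ TightlyConnected k C ∧
    ∀ C' : Finset (Finset A), C ⊆ C' → C' ⊆ E → TightlyConnected k C' → C' = C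

/-- `δ` has the `(k,d)`-Hamilton-cycle property. -/
def HamCycleProp (k d : ℕ) (δ : ℝ) : Prop :=
  ∀ μ : ℝ, 0 < μ → ∃ n₀ : ℕ, ∀ (B : Type) [DecidableEq B],
    ∀ (V : Finset B) (E : Finset (Finset B)),
      n₀ ≤ V.card → (∀ e ∈ E, e ⊆ V ∧ e.card = k) →
      (∀ S ⊆ V, S.card = d →
        (δ + μ) * (((V.card - d).choose (k - d) : ℕ) : ℝ)
          ≤ ((E.filter fun e => S ⊆ e).card : ℝ)) →
      HasTightHamCycle k V E

/-- `δ` has the `(k,d)`-Hamilton-framework property. -/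
def HamFrameworkProp (k d : ℕ) (δ : ℝ) : Prop :=
  ∀ μ : ℝ, 0 < μ → ∃ γ₀ : ℝ, 0 < γ₀ ∧ ∀ γ : ℝ, 0 < γ → γ ≤ γ₀ →
    ∃ α₀ : ℝ, 0 < α₀ ∧ ∀ a : ℝ, 0 < a → a ≤ α₀ →
      ∃ ε₀ : ℝ, 0 < ε₀ ∧ ∀ ε : ℝ, 0 < ε → ε ≤ ε₀ →
        ∃ t₀ : ℕ, ∀ t : ℕ, t₀ ≤ t →
          ∀ (B : Type) [DecidableEq B], ∀ (VR : Finset B) (ER : Finset (Finset B)),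
            VR.card = t → (∀ e ∈ ER, e ⊆ VR ∧ e.card = k) →
            (∀ S ⊆ VR, S.card = d →
              (δ + μ) * (((t - d).choose (k - d) : ℕ) : ℝ)
                ≤ ((ER.filter fun e => S ⊆ e).card : ℝ)) →
            ∀ I : Finset (Finset B), I ⊆ ER → (I.card : ℝ) ≤ ε * ((t.choose k : ℕ) : ℝ) →
              ∃ (VH : Finset B) (EH : Finset (Finset B)),
                VH ⊆ VR ∧ EH ⊆ ER ∧ (∀ e ∈ EH, e ⊆ VH) ∧ (∀ e ∈ EH, e ∉ I) ∧
                IsHamFramework k a γ δ VR VH EH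

/-- `δ` has the `(k,d)`-Hamilton-vicinity property. -/
def HamVicinityProp (k d : ℕ) (δ : ℝ) : Prop :=
  ∀ μ : ℝ, 0 < μ → ∃ γ₀ : ℝ, 0 < γ₀ ∧ ∀ γ : ℝ, 0 < γ → γ ≤ γ₀ →
    ∃ α₀ : ℝ, 0 < α₀ ∧ ∀ a : ℝ, 0 < a → a ≤ α₀ →
      ∃ t₀ : ℕ, ∀ t : ℕ, t₀ ≤ t →
        ∀ (B : Type) [DecidableEq B], ∀ (V : Finset B) (E : Finset (Finset B)),
          V.card = t → (∀ e ∈ E, e ⊆ V ∧ e.card = k) →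
          PerturbedDegLB k d a (δ + μ) V E →
          (∀ v ∈ V, ∃ e ∈ E, v ∈ e) →
          ∃ C : Finset B → Finset (Finset B), IsHamVicinity k d γ δ V E C

/-!
An ordering of an edge (a list of its vertices) tightly reaches another one if some tight walk
starts with the first and ends with the second. Replacing a single vertex of an ordering in place
by a vertex that forms an edge with the remaining ones is such a move: rotate the replaced vertex
to the front, step forward, rotate back. Consecutive edges of a tight walk differ in one vertex,
so by tight connectivity every ordering of every edge reaches some ordering of the switcher edge
`e`, and (reversing walks) is reached from one. At the switcher, if `c` is the vertex provided
for `b`, the in-place replacements `a ↦ c`, `b ↦ a`, `c ↦ b` transpose `a` and `b`. Transpositions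
through `a` generate all permutations, so all orderings of `e` reach each other.
-/

section

variable {l : ℕ} {C : Finset (Finset A)}

def TightReachable (l : ℕ) (C : Finset (Finset A)) (σ τ : List A) : Prop :=
  ∃ w : List A, IsTightWalk l C w ∧ w.take l = σ ∧ w.drop (w.length - l) = τ

namespace TightReachable

theorem refl {σ : List A} (hlen : σ.length = l) (hσ : σ.toFinset ∈ C) :
    TightReachable l C σ σ := by
  refine ⟨σ, ⟨hlen.ge, fun i hi => ?_⟩, List.take_of_length_le hlen.le, by simp [hlen]⟩
  obtain rfl : i = 0 := by omega
  simpa [walkEdgeAt, List.take_of_length_le hlen.le] using hσ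

theorem trans {σ τ υ : List A} (h₁ : TightReachable l C σ τ) (h₂ : TightReachable l C τ υ) :
    TightReachable l C σ υ := by
  obtain ⟨w₁, hw₁, hσ, hτ⟩ := h₁
  obtain ⟨w₂, hw₂, hτ', hυ⟩ := h₂
  have hl₁ := hw₁.1
  have hl₂ := hw₂.1
  set t := w₁.take (w₁.length - l)
  have ht : t.length = w₁.length - l := by simp [t]
  have hglue : w₁ ++ w₂.drop l = t ++ w₂ := by
    conv_lhs => rw [← List.take_append_drop (w₁.length - l) w₁]
    rw [hτ, ← hτ', List.append_assoc, List.take_append_drop]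
  refine ⟨w₁ ++ w₂.drop l, ⟨by simp; omega, fun i hi => ?_⟩, ?_, ?_⟩
  · simp only [List.length_append, List.length_drop] at hi
    rcases le_or_gt (i + l) w₁.length with hi₁ | hi₁
    · convert hw₁.2 i hi₁ using 1
      unfold walkEdgeAt
      rw [List.drop_append_of_le_length (by omega), List.take_append_of_le_length (by simp; omega)]
    · obtain ⟨k, rfl⟩ := Nat.exists_eq_add_of_le (show w₁.length - l ≤ i by omega)
      convert hw₂.2 k (by omega) using 1
      unfold walkEdgeAt
      rw [hglue, ← ht, List.drop_length_add_append]
  · rw [List.take_append_of_le_length hl₁, hσ]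
  · rw [hglue, show (t ++ w₂).length - l = t.length + (w₂.length - l) by simp; omega,
      List.drop_length_add_append, hυ]

theorem cons_snoc {v u : A} {ρ : List A} (hlen : (v :: ρ).length = l)
    (h₁ : (v :: ρ).toFinset ∈ C) (h₂ : (ρ ++ [u]).toFinset ∈ C) :
    TightReachable l C (v :: ρ) (ρ ++ [u]) := by
  subst hlen
  have htake : (v :: (ρ ++ [u])).take (ρ.length + 1) = v :: ρ := by simp
  refine ⟨v :: (ρ ++ [u]), ⟨by simp, fun i hi => ?_⟩, htake, by simp⟩
  simp only [List.length_cons, List.length_append, List.length_nil] at hi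
  obtain rfl | rfl : i = 0 ∨ i = 1 := by omega
  · simpa [walkEdgeAt, htake] using h₁
  · simpa [walkEdgeAt, List.take_of_length_le] using h₂

theorem append_comm {s t : List A} (hlen : (s ++ t).length = l) (h : (s ++ t).toFinset ∈ C) :
    TightReachable l C (s ++ t) (t ++ s) := by
  induction s generalizing t with
  | nil => simpa using refl hlen h
  | cons v s ih =>
    have h' : (s ++ (t ++ [v])).toFinset ∈ C := by
      convert h using 1; ext; simp
    have hstep : TightReachable l C (v :: (s ++ t)) (s ++ (t ++ [v])) := by
      simpa using cons_snoc (u := v) hlen h (by simpa using h')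
    simpa using hstep.trans (ih (by simp at hlen ⊢; omega) h')

theorem replace {p q : List A} {v u : A} (hlen : (p ++ v :: q).length = l)
    (h₁ : (p ++ v :: q).toFinset ∈ C) (h₂ : (p ++ u :: q).toFinset ∈ C) :
    TightReachable l C (p ++ v :: q) (p ++ u :: q) := by
  have h₁' : (v :: (q ++ p)).toFinset ∈ C := by convert h₁ using 1; ext; simp; tauto
  have h₂' : (q ++ (p ++ [u])).toFinset ∈ C := by convert h₂ using 1; ext; simp; tauto
  have hstep : TightReachable l C (v :: (q ++ p)) (q ++ (p ++ [u])) := by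
    simpa using cons_snoc (u := u) (by simp at hlen ⊢; omega) h₁' (by simpa using h₂')
  have hrot : TightReachable l C (q ++ (p ++ [u])) (p ++ [u] ++ q) :=
    append_comm (by simp at hlen ⊢; omega) h₂'
  simpa using (append_comm hlen h₁).trans (hstep.trans hrot)

end TightReachable

theorem walkEdgeAt_reverse {w : List A} {i : ℕ} (hi : i + l ≤ w.length) :
    walkEdgeAt l w.reverse i = walkEdgeAt l w (w.length - i - l) := by
  unfold walkEdgeAt
  have hdrop : w.reverse.drop i = (w.take (w.length - i)).reverse := by
    rw [List.reverse_take]; congr 1; omega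
  have hlen : (w.take (w.length - i)).length = w.length - i := by simp
  rw [hdrop, List.take_reverse, hlen, List.toFinset_reverse, List.drop_take]
  congr 3; omega

theorem IsTightWalk.reverse {w : List A} (hw : IsTightWalk l C w) : IsTightWalk l C w.reverse := by
  refine ⟨by simpa using hw.1, fun i hi => ?_⟩
  rw [List.length_reverse] at hi
  rw [walkEdgeAt_reverse hi]
  exact hw.2 _ (by omega)

theorem TightReachable.reverse {σ τ : List A} (h : TightReachable l C σ τ) :
    TightReachable l C τ.reverse σ.reverse := by
  obtain ⟨w, hw, hσ, hτ⟩ := h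
  refine ⟨w.reverse, hw.reverse, ?_, ?_⟩
  · rw [List.take_reverse, hτ]
  · rw [List.length_reverse, ← List.reverse_take, hσ]

theorem walkEdgeAt_succ_eq_insert_left {k j : ℕ} {w : List A} (hj : j < w.length) :
    walkEdgeAt (k + 1) w j = insert w[j] (walkEdgeAt k w (j + 1)) := by
  rw [walkEdgeAt, List.drop_eq_getElem_cons hj, List.take_succ_cons, List.toFinset_cons,
    walkEdgeAt]

theorem walkEdgeAt_succ_eq_insert_right {k j : ℕ} {w : List A} (hj : j + k < w.length) :
    walkEdgeAt (k + 1) w j = insert w[j + k] (walkEdgeAt k w j) := by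
  ext z
  simp [walkEdgeAt, List.take_add_one, hj, or_comm]

theorem card_walkEdgeAt_le (k : ℕ) (w : List A) (i : ℕ) : (walkEdgeAt k w i).card ≤ k :=
  (List.toFinset_card_le _).trans (List.length_take_le _ _)

def EdgeReachable (l : ℕ) (C : Finset (Finset A)) (e e' : Finset A) : Prop :=
  ∀ σ : List A, σ.Nodup → σ.toFinset = e →
    ∃ τ : List A, τ.Nodup ∧ τ.toFinset = e' ∧ TightReachable l C σ τ

theorem List.Nodup.length_eq_of_toFinset_mem {σ : List A} (hσ : σ.Nodup)
    (hC : ∀ e ∈ C, e.card = l) (hσC : σ.toFinset ∈ C) : σ.length = l := by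
  rw [← List.toFinset_card_of_nodup hσ, hC _ hσC]

namespace EdgeReachable

theorem refl (hC : ∀ e ∈ C, e.card = l) {e : Finset A} (he : e ∈ C) : EdgeReachable l C e e :=
  fun σ hσ hσe => ⟨σ, hσ, hσe, .refl (hσ.length_eq_of_toFinset_mem hC (hσe ▸ he)) (hσe ▸ he)⟩

theorem trans {e e' e'' : Finset A} (h₁ : EdgeReachable l C e e') (h₂ : EdgeReachable l C e' e'') :
    EdgeReachable l C e e'' := fun σ hσ hσe => by
  obtain ⟨τ, hτ, hτe, hστ⟩ := h₁ σ hσ hσe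
  obtain ⟨υ, hυ, hυe, hτυ⟩ := h₂ τ hτ hτe
  exact ⟨υ, hυ, hυe, hστ.trans hτυ⟩

theorem insert_insert (hC : ∀ e ∈ C, e.card = l) {M : Finset A} {x y : A}
    (hx : insert x M ∈ C) (hy : insert y M ∈ C) (hxM : x ∉ M) (hyM : y ∉ M) :
    EdgeReachable l C (insert x M) (insert y M) := by
  intro σ hσ hσe
  obtain ⟨p, q, rfl⟩ := List.append_of_mem (show x ∈ σ by simp [← List.mem_toFinset, hσe])
  have hpq : (p ++ q).toFinset = M := by
    have hx' : x ∉ (p ++ q).toFinset := by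
      simpa using (List.nodup_cons.1 (List.nodup_middle.1 hσ)).1
    calc (p ++ q).toFinset = (insert x (p ++ q).toFinset).erase x := (erase_insert hx').symm
      _ = (insert x M).erase x := by rw [← hσe]; congr 1; ext; simp
      _ = M := erase_insert hxM
  have hτe : (p ++ y :: q).toFinset = insert y M := by
    rw [← hpq]; ext; simp
  refine ⟨p ++ y :: q, ?_, hτe, .replace ?_ (hσe ▸ hx) (hτe ▸ hy)⟩
  · refine List.nodup_middle.2 (List.nodup_cons.2 ⟨?_, (List.nodup_middle.1 hσ).of_cons⟩)
    simpa [← List.mem_toFinset, hpq] using hyM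
  · exact hσ.length_eq_of_toFinset_mem hC (hσe ▸ hx)

end EdgeReachable

theorem IsTightWalk.edgeReachable_succ {k j : ℕ} (hC : ∀ e ∈ C, e.card = k + 1) {w : List A}
    (hw : IsTightWalk (k + 1) C w) (hj : j + (k + 1) < w.length) :
    EdgeReachable (k + 1) C (walkEdgeAt (k + 1) w j) (walkEdgeAt (k + 1) w (j + 1)) ∧
      EdgeReachable (k + 1) C (walkEdgeAt (k + 1) w (j + 1)) (walkEdgeAt (k + 1) w j) := by
  have h₀ := hw.2 j (by omega)
  have h₁ := hw.2 (j + 1) (by omega)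
  rw [walkEdgeAt_succ_eq_insert_left (by omega)] at h₀ ⊢
  rw [walkEdgeAt_succ_eq_insert_right (by omega)] at h₁ ⊢
  have hnot : ∀ z, insert z (walkEdgeAt k w (j + 1)) ∈ C → z ∉ walkEdgeAt k w (j + 1) := by
    intro z hz hzM
    have := hC _ hz
    rw [insert_eq_of_mem hzM] at this
    have := card_walkEdgeAt_le k w (j + 1)
    omega
  exact ⟨.insert_insert hC h₀ h₁ (hnot _ h₀) (hnot _ h₁),
    .insert_insert hC h₁ h₀ (hnot _ h₁) (hnot _ h₀)⟩

theorem IsTightWalk.edgeReachable (hl : 1 ≤ l) (hC : ∀ e ∈ C, e.card = l) {w : List A}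
    (hw : IsTightWalk l C w) {i j : ℕ} (hi : i + l ≤ w.length) (hj : j + l ≤ w.length) :
    EdgeReachable l C (walkEdgeAt l w i) (walkEdgeAt l w j) := by
  obtain ⟨k, rfl⟩ : ∃ k, l = k + 1 := ⟨l - 1, by omega⟩
  have key : ∀ i n, i + n + (k + 1) ≤ w.length →
      EdgeReachable (k + 1) C (walkEdgeAt (k + 1) w i) (walkEdgeAt (k + 1) w (i + n)) ∧
        EdgeReachable (k + 1) C (walkEdgeAt (k + 1) w (i + n)) (walkEdgeAt (k + 1) w i) := by
    intro i n
    induction n with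
    | zero => exact fun h => ⟨.refl hC (hw.2 i h), .refl hC (hw.2 i h)⟩
    | succ n ih =>
      intro h
      obtain ⟨hfwd, hbwd⟩ := ih (by omega)
      obtain ⟨hstep, hback⟩ := hw.edgeReachable_succ hC (j := i + n) (by omega)
      exact ⟨hfwd.trans hstep, hback.trans hbwd⟩
  rcases le_total i j with hij | hji
  · obtain ⟨n, rfl⟩ := Nat.exists_eq_add_of_le hij
    exact (key i n hj).1
  · obtain ⟨n, rfl⟩ := Nat.exists_eq_add_of_le hji
    exact (key j n hi).2

theorem TightlyConnected.edgeReachable (hl : 1 ≤ l) (hC : ∀ e ∈ C, e.card = l)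
    (hconn : TightlyConnected l C) {e e' : Finset A} (he : e ∈ C) (he' : e' ∈ C) :
    EdgeReachable l C e e' := by
  obtain ⟨w, hw, ⟨i, hi, rfl⟩, ⟨j, hj, rfl⟩⟩ := hconn e he e' he'
  exact hw.edgeReachable hl hC hi hj

theorem List.map_swap_eq_self {x y : A} {s : List A} (hx : x ∉ s) (hy : y ∉ s) :
    s.map (Equiv.swap x y) = s := by
  conv_rhs => rw [← List.map_id s]
  exact List.map_congr_left fun z hz =>
    Equiv.swap_apply_of_ne_of_ne (ne_of_mem_of_not_mem hz hx) (ne_of_mem_of_not_mem hz hy)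

theorem List.map_swap_append_cons {p q r : List A} {x y : A}
    (h : (p ++ x :: q ++ y :: r).Nodup) :
    (p ++ x :: q ++ y :: r).map (Equiv.swap x y) = p ++ y :: q ++ x :: r := by
  simp only [List.nodup_append, List.nodup_cons, List.mem_append, List.mem_cons] at h
  have : x ∉ p ∧ x ∉ q ∧ x ∉ r ∧ y ∉ p ∧ y ∉ q ∧ y ∉ r := by grind
  simp [List.map_swap_eq_self, this]

theorem List.toFinset_map_swap {x y : A} {σ : List A} (hx : x ∈ σ) (hy : y ∈ σ) :
    (σ.map (Equiv.swap x y)).toFinset = σ.toFinset := by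
  ext z
  rw [List.mem_toFinset, List.mem_toFinset, List.mem_map_of_involutive (Equiv.swap_apply_self x y)]
  rcases eq_or_ne z x with rfl | hzx
  · simp [hx, hy]
  rcases eq_or_ne z y with rfl | hzy
  · simp [hx, hy]
  rw [Equiv.swap_apply_of_ne_of_ne hzx hzy]

namespace TightReachable

theorem exchange {p q r : List A} {x y c : A} (hσ : (p ++ x :: q ++ y :: r).Nodup)
    (hlen : (p ++ x :: q ++ y :: r).length = l) (hσC : (p ++ x :: q ++ y :: r).toFinset ∈ C)
    (hcx : insert c ((p ++ x :: q ++ y :: r).toFinset.erase x) ∈ C)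
    (hcy : insert c ((p ++ x :: q ++ y :: r).toFinset.erase y) ∈ C) :
    TightReachable l C (p ++ x :: q ++ y :: r) (p ++ y :: q ++ x :: r) := by
  set S := (p ++ q ++ r).toFinset
  have hset : ∀ v u, (p ++ v :: q ++ u :: r).toFinset = insert v (insert u S) := by
    intro v u; ext; simp [S]
  simp only [List.nodup_append, List.nodup_cons, List.mem_append, List.mem_cons] at hσ
  have hxS : x ∉ insert y S := by simp [S]; grind
  have hyS : y ∉ S := by simp [S]; grind
  have hxy : x ≠ y := by grind
  rw [hset, erase_insert hxS] at hcx
  rw [hset, erase_insert_of_ne hxy, erase_insert hyS] at hcy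
  rw [← hset] at hcx hcy
  have hσC' : (p ++ y :: q ++ x :: r).toFinset ∈ C := by rwa [hset, insert_comm, ← hset]
  have h₁ : TightReachable l C (p ++ x :: (q ++ y :: r)) (p ++ c :: (q ++ y :: r)) :=
    replace (by simpa using hlen) (by simpa using hσC) (by simpa using hcx)
  have h₂ : TightReachable l C (p ++ c :: q ++ y :: r) (p ++ c :: q ++ x :: r) :=
    replace (by simp at hlen ⊢; omega) hcx hcy
  have h₃ : TightReachable l C (p ++ c :: (q ++ x :: r)) (p ++ y :: (q ++ x :: r)) :=
    replace (by simp at hlen ⊢; omega) (by simpa using hcy) (by simpa using hσC')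
  simpa using h₁.trans ((by simpa using h₂ : TightReachable l C _ _).trans h₃)

theorem map_swap {σ : List A} {x y c : A} (hσ : σ.Nodup) (hlen : σ.length = l)
    (hσC : σ.toFinset ∈ C) (hx : x ∈ σ) (hy : y ∈ σ) (hcx : insert c (σ.toFinset.erase x) ∈ C)
    (hcy : insert c (σ.toFinset.erase y) ∈ C) :
    TightReachable l C σ (σ.map (Equiv.swap x y)) := by
  rcases eq_or_ne x y with rfl | hxy
  · simpa using refl hlen hσC
  obtain ⟨p, s, rfl⟩ := List.append_of_mem hx
  rcases List.mem_append.1 hy with hyp | hys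
  · obtain ⟨p, q, rfl⟩ := List.append_of_mem hyp
    rw [Equiv.swap_comm, List.map_swap_append_cons hσ]
    exact exchange hσ hlen hσC hcy hcx
  · obtain ⟨q, r, rfl⟩ := List.append_of_mem (List.mem_of_ne_of_mem hxy.symm hys)
    rw [show p ++ x :: (q ++ y :: r) = p ++ x :: q ++ y :: r by simp] at *
    rw [List.map_swap_append_cons hσ]
    exact exchange hσ hlen hσC hcx hcy

theorem map_swap_of_switcher (hC : ∀ e ∈ C, e.card = l) {e : Finset A} {a : A} (he : e ∈ C)
    (ha : a ∈ e) (hsw : ∀ b ∈ e, ∃ c, insert c (e.erase a) ∈ C ∧ insert c (e.erase b) ∈ C)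
    {σ : List A} (hσ : σ.Nodup) (hσe : σ.toFinset = e) {x y : A} (hx : x ∈ e) (hy : y ∈ e) :
    TightReachable l C σ (σ.map (Equiv.swap x y)) := by
  have hcentre : ∀ σ : List A, σ.Nodup → σ.toFinset = e → ∀ b ∈ e,
      TightReachable l C σ (σ.map (Equiv.swap a b)) ∧
        (σ.map (Equiv.swap a b)).Nodup ∧ (σ.map (Equiv.swap a b)).toFinset = e := by
    intro σ hσ hσe b hb
    have hmem : ∀ z ∈ e, z ∈ σ := fun z hz => List.mem_toFinset.1 (hσe ▸ hz)
    obtain ⟨c, hca, hcb⟩ := hsw b hb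
    refine ⟨map_swap hσ (hσ.length_eq_of_toFinset_mem hC (hσe ▸ he)) (hσe ▸ he) (hmem a ha)
      (hmem b hb) (hσe ▸ hca) (hσe ▸ hcb), hσ.map (Equiv.injective _), ?_⟩
    rw [List.toFinset_map_swap (hmem a ha) (hmem b hb), hσe]
  rcases eq_or_ne x y with rfl | hxy
  · simpa using refl (hσ.length_eq_of_toFinset_mem hC (hσe ▸ he)) (hσe ▸ he)
  by_cases hxa : x = a
  · subst hxa
    exact (hcentre σ hσ hσe y hy).1
  by_cases hya : y = a
  · subst hya
    rw [Equiv.swap_comm]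
    exact (hcentre σ hσ hσe x hx).1
  obtain ⟨h₁, hσ₁, hσ₁e⟩ := hcentre σ hσ hσe x hx
  obtain ⟨h₂, hσ₂, hσ₂e⟩ := hcentre _ hσ₁ hσ₁e y hy
  have h₃ := (hcentre _ hσ₂ hσ₂e x hx).1
  have hconj : Equiv.swap a x * Equiv.swap a y * Equiv.swap a x = Equiv.swap x y := by
    simpa [Equiv.swap_apply_of_ne_of_ne hya hxy.symm] using
      (Equiv.swap_apply_apply (Equiv.swap a x) a y).symm
  convert h₁.trans (h₂.trans h₃) using 1
  rw [List.map_map, List.map_map, ← hconj]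
  rfl

theorem append_of_perm (hC : ∀ e ∈ C, e.card = l) {e : Finset A} (he : e ∈ C)
    (hswap : ∀ σ : List A, σ.Nodup → σ.toFinset = e → ∀ x ∈ e, ∀ y ∈ e,
      TightReachable l C σ (σ.map (Equiv.swap x y)))
    {s t : List A} (hst : s.Perm t) (p : List A) (hσ : (p ++ s).Nodup)
    (hσe : (p ++ s).toFinset = e) : TightReachable l C (p ++ s) (p ++ t) := by
  induction hst generalizing p with
  | nil => simpa using refl (hσ.length_eq_of_toFinset_mem hC (hσe ▸ he)) (hσe ▸ he)
  | cons x _ ih => simpa using ih (p ++ [x]) (by simpa using hσ) (by simpa using hσe)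
  | swap x y s =>
    have hmem : ∀ z ∈ p ++ y :: x :: s, z ∈ e := fun z hz => hσe ▸ List.mem_toFinset.2 hz
    have := hswap _ hσ hσe y (hmem y (by simp)) x (hmem x (by simp))
    rw [show p ++ y :: x :: s = p ++ y :: [] ++ x :: s by simp,
      List.map_swap_append_cons (by simpa using hσ)] at this
    simpa using this
  | trans h₁₂ _ ih₁ ih₂ =>
    have hp := h₁₂.append_left p
    exact (ih₁ p hσ hσe).trans
      (ih₂ p (hp.nodup_iff.1 hσ) (by rwa [← List.toFinset_eq_of_perm _ _ hp]))

theorem of_switcher (hC : ∀ e ∈ C, e.card = l) {e : Finset A} {a : A} (he : e ∈ C)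
    (ha : a ∈ e) (hsw : ∀ b ∈ e, ∃ c, insert c (e.erase a) ∈ C ∧ insert c (e.erase b) ∈ C)
    {σ τ : List A} (hσ : σ.Nodup) (hσe : σ.toFinset = e) (hτ : τ.Nodup) (hτe : τ.toFinset = e) :
    TightReachable l C σ τ := by
  have hst : σ.Perm τ := (List.perm_ext_iff_of_nodup hσ hτ).2 fun z => by
    rw [← List.mem_toFinset, hσe, ← hτe, List.mem_toFinset]
  exact append_of_perm hC he
    (fun _ hσ' hσ'e _ hx _ hy => map_swap_of_switcher hC he ha hsw hσ' hσ'e hx hy) hst [] hσ hσe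

end TightReachable

end

/-- tightly connected plus a switcher gives strong connectivity. -/
theorem switcher_strongly_connected {B : Type*} [DecidableEq B] (l : ℕ) (hl : 1 ≤ l)
    (C : Finset (Finset B)) (hC : ∀ e ∈ C, e.card = l)
    (hconn : TightlyConnected l C) (hsw : HasSwitcher C) :
    ∀ l₁ l₂ : List B, l₁.length = l → l₁.Nodup → l₁.toFinset ∈ C →
      l₂.length = l → l₂.Nodup → l₂.toFinset ∈ C →
      ∃ w : List B, IsTightWalk l C w ∧ w.take l = l₁ ∧ w.drop (w.length - l) = l₂ := by
  intro l₁ l₂ _ h₁ h₁C _ h₂ h₂C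
  obtain ⟨e, he, a, ha, hswitch⟩ := hsw
  have hswitch' : ∀ b ∈ e, ∃ c, insert c (e.erase a) ∈ C ∧ insert c (e.erase b) ∈ C :=
    fun b hb => (hswitch b hb).imp fun _ => And.right
  obtain ⟨τ₁, hτ₁, hτ₁e, hr₁⟩ := hconn.edgeReachable hl hC h₁C he l₁ h₁ rfl
  obtain ⟨τ₂, hτ₂, hτ₂e, hr₂⟩ :=
    hconn.edgeReachable hl hC (l₂.toFinset_reverse ▸ h₂C) he l₂.reverse
      (List.nodup_reverse.2 h₂) List.toFinset_reverse
  have hmid : TightReachable l C τ₁ τ₂.reverse :=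
    .of_switcher hC he ha hswitch' hτ₁ hτ₁e (List.nodup_reverse.2 hτ₂)
      (by rwa [List.toFinset_reverse])
  exact List.reverse_reverse l₂ ▸ hr₁.trans (hmid.trans hr₂.reverse)
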